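/- Let n ≥ 1, N ≥ 1, q > 0, 0 < T < ∞, let Ω ⊆ ℝ^n be measurable with finite measure, and let u ∈ L^{q+1}(Ω × (0,T), ℝ^N), extended by u(x,t) := 0 for t > T. Then lim_{h ↓ 0} ∫_0^T ∫_Ω (1/h) ∫_t^{t+h} 𝔟[u(x,s), u(x,t)] ds dx dt = 0; that is, the Steklov averages (x,t) ↦ ⨍_t^{t+h} 𝔟[u(x,s), u(x,t)] ds converge to 𝔟[u(x,t), u(x,t)] = 0 in L^1(Ω × (0,T)) as h ↓ 0. -/

import Mathlib

/-!
Let `v := 1_{Ω × (0,T]} u ∈ L^{q+1}` and `w := v^{⟨q⟩} ∈ L^{(q+1)/q}`. Since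
`𝔟[a, c] = q/(q+1) (|a|^{q+1} - |c|^{q+1}) - (a^{⟨q⟩} - c^{⟨q⟩})·c`, Hölder's inequality bounds
`∫ |𝔟[v(x, t+r), v(x, t)]|` by `q/(q+1)` times the `L¹` distance between `|v|^{q+1}` and its
translate by `r` in time, plus `‖v‖_{q+1}` times the `L^{(q+1)/q}` distance between `w` and its
translate. Both tend to `0` as `r → 0` by continuity of translations in `Lᵖ`. By Tonelli, the
integral of the Steklov average at scale `h` is bounded by the mean of this quantity over
`r ∈ (0, h]`, so it tends to `0` as well.
-/

open MeasureTheory intervalIntegral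

/-- For `α > 0` and a vector `u`, the power `u^{⟨α⟩} := ‖u‖^(α-1) • u` (with `0^{⟨α⟩} = 0`). -/
noncomputable def vpow {E : Type*} [NormedAddCommGroup E] [NormedSpace ℝ E] (α : ℝ) (u : E) : E :=
  (‖u‖ ^ (α - 1)) • u

/-- The boundary term `𝔟[u,v] := (1/(q+1))|v|^{q+1} + (q/(q+1))|u|^{q+1} − u^{⟨q⟩}·v`. -/
noncomputable def bterm {E : Type*} [NormedAddCommGroup E] [InnerProductSpace ℝ E]
    (q : ℝ) (u v : E) : ℝ :=
  (1 / (q + 1)) * ‖v‖ ^ (q + 1) + (q / (q + 1)) * ‖u‖ ^ (q + 1) - (inner ℝ (vpow q u) v : ℝ)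

open Filter Set
open scoped ENNReal Topology

section Pointwise

variable {E : Type*} [NormedAddCommGroup E] [InnerProductSpace ℝ E] {q : ℝ}

theorem norm_vpow (hq : q ≠ 0) (u : E) : ‖vpow q u‖ = ‖u‖ ^ q := by
  rcases eq_or_ne u 0 with rfl | hu
  · simp [vpow, Real.zero_rpow hq]
  · rw [vpow, norm_smul, Real.norm_of_nonneg (by positivity),
      ← Real.rpow_add_one (norm_ne_zero_iff.2 hu), sub_add_cancel]

theorem inner_vpow_self (hq : q + 1 ≠ 0) (u : E) : inner ℝ (vpow q u) u = ‖u‖ ^ (q + 1) := by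
  rcases eq_or_ne u 0 with rfl | hu
  · simp [vpow, Real.zero_rpow hq]
  · have hu' : ‖u‖ ≠ 0 := norm_ne_zero_iff.2 hu
    rw [vpow, real_inner_smul_left, real_inner_self_eq_norm_mul_norm, ← mul_assoc,
      ← Real.rpow_add_one hu', sub_add_cancel, ← Real.rpow_add_one hu']

theorem bterm_eq (hq : q + 1 ≠ 0) (u v : E) :
    bterm q u v = q / (q + 1) * (‖u‖ ^ (q + 1) - ‖v‖ ^ (q + 1))
      - inner ℝ (vpow q u - vpow q v) v := by
  rw [bterm, inner_sub_left, inner_vpow_self hq]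
  field_simp
  ring

end Pointwise

section Lp

variable {α E : Type*} [MeasurableSpace α] {μ : Measure α}
  [NormedAddCommGroup E] [InnerProductSpace ℝ E] {q : ℝ}

theorem MeasureTheory.AEStronglyMeasurable.vpow {f : α → E} (hf : AEStronglyMeasurable f μ)
    (q : ℝ) : AEStronglyMeasurable (fun x ↦ vpow q (f x)) μ :=
  (hf.norm.aemeasurable.pow_const _).aestronglyMeasurable.smul hf

theorem MeasureTheory.MemLp.vpow {p : ℝ≥0∞} {f : α → E} (hf : MemLp f p μ) (hq : 0 < q) :
    MemLp (fun x ↦ vpow q (f x)) (p / ENNReal.ofReal q) μ := by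
  refine (hf.norm_rpow_div (ENNReal.ofReal q)).congr_norm (hf.1.vpow q) (.of_forall fun x ↦ ?_)
  rw [ENNReal.toReal_ofReal hq.le, norm_vpow hq.ne', Real.norm_of_nonneg (by positivity)]

theorem lintegral_enorm_bterm_le (hq : q + 1 ≠ 0) {p p' : ℝ≥0∞} [ENNReal.HolderConjugate p' p]
    {u v : α → E} (hu : AEStronglyMeasurable u μ) (hv : AEStronglyMeasurable v μ) :
    ∫⁻ x, ‖bterm q (u x) (v x)‖ₑ ∂μ ≤
      ‖q / (q + 1)‖ₑ * eLpNorm (fun x ↦ ‖u x‖ ^ (q + 1) - ‖v x‖ ^ (q + 1)) 1 μ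
        + eLpNorm (fun x ↦ vpow q (u x) - vpow q (v x)) p' μ * eLpNorm v p μ := by
  have hg (f : α → E) (hf : AEStronglyMeasurable f μ) :
      AEStronglyMeasurable (fun x ↦ ‖f x‖ ^ (q + 1)) μ :=
    (hf.norm.aemeasurable.pow_const _).aestronglyMeasurable
  rw [← eLpNorm_one_eq_lintegral_enorm]
  simp_rw [bterm_eq hq]
  calc _ ≤ eLpNorm (fun x ↦ q / (q + 1) * (‖u x‖ ^ (q + 1) - ‖v x‖ ^ (q + 1))) 1 μ
        + eLpNorm (fun x ↦ inner ℝ (vpow q (u x) - vpow q (v x)) (v x)) 1 μ :=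
        eLpNorm_sub_le (((hg u hu).sub (hg v hv)).const_mul _)
          (((hu.vpow q).sub (hv.vpow q)).inner hv) le_rfl
    _ ≤ _ := by
      gcongr
      · exact (eLpNorm_const_smul (q / (q + 1)) _ 1 μ).le
      · simpa using eLpNorm_le_eLpNorm_mul_eLpNorm_of_nnnorm
          (f := fun x ↦ vpow q (u x) - vpow q (v x)) ((hu.vpow q).sub (hv.vpow q)) hv
          (fun a b ↦ inner ℝ a b) 1 (.of_forall fun x ↦ by simpa using nnnorm_inner_le_nnnorm _ _)

end Lp

section Translation

variable {X Y E : Type*} [TopologicalSpace X] [MeasurableSpace X] [BorelSpace X] [R1Space X]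
  {μ : Measure X} [IsLocallyFiniteMeasure μ] [μ.InnerRegularCompactLTTop] [TopologicalSpace Y]
  [NormedAddCommGroup E] {c : Y → C(X, X)} {y₀ : Y}

theorem tendsto_eLpNorm_comp_sub {p : ℝ≥0∞} [Fact (1 ≤ p)] (hp : p ≠ ∞) (hc : Continuous c)
    (hcμ : ∀ y, MeasurePreserving (c y) μ μ) (hc₀ : c y₀ = ContinuousMap.id X)
    {f : X → E} (hf : MemLp f p μ) :
    Tendsto (fun y ↦ eLpNorm (fun x ↦ f (c y x) - f x) p μ) (𝓝 y₀) (𝓝 0) := by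
  let F : Y → Lp E p μ := fun y ↦ Lp.compMeasurePreserving (c y) (hcμ y) (hf.toLp f)
  have hF_ae (y : Y) : F y =ᵐ[μ] fun x ↦ f (c y x) :=
    (Lp.coeFn_compMeasurePreserving _ _).trans
      ((hcμ y).quasiMeasurePreserving.ae_eq_comp hf.coeFn_toLp)
  have hF₀ : F y₀ = hf.toLp f :=
    Lp.ext ((hF_ae y₀).trans (by rw [hc₀]; exact hf.coeFn_toLp.symm))
  have hF : Tendsto F (𝓝 y₀) (𝓝 (hf.toLp f)) :=
    hF₀ ▸ ((continuous_const (y := hf.toLp f)).compMeasurePreservingLp hc hcμ hp).tendsto y₀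
  have hdist (y : Y) : eLpNorm (fun x ↦ f (c y x) - f x) p μ = edist (F y) (hf.toLp f) := by
    rw [Lp.edist_def]
    exact eLpNorm_congr_ae ((hF_ae y).sub hf.coeFn_toLp).symm
  simpa only [hdist] using tendsto_iff_edist_tendsto_0.1 hF

theorem tendsto_lintegral_enorm_bterm_comp [InnerProductSpace ℝ E] (hc : Continuous c)
    (hcμ : ∀ y, MeasurePreserving (c y) μ μ) (hc₀ : c y₀ = ContinuousMap.id X)
    {q : ℝ} (hq : 0 < q) {v : X → E} (hv : MemLp v (ENNReal.ofReal (q + 1)) μ) :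
    Tendsto (fun y ↦ ∫⁻ x, ‖bterm q (v (c y x)) (v x)‖ₑ ∂μ) (𝓝 y₀) (𝓝 0) := by
  set p := ENNReal.ofReal (q + 1)
  have hp₀ : p ≠ 0 := (ENNReal.ofReal_pos.2 (by linarith)).ne'
  have hp : p ≠ ∞ := ENNReal.ofReal_ne_top
  have hpq : ENNReal.HolderConjugate (p / ENNReal.ofReal q) p := by
    rw [← ENNReal.ofReal_div_of_pos hq]
    refine Real.HolderConjugate.ennrealOfReal (Real.holderConjugate_iff.2 ⟨?_, ?_⟩)
    · rw [lt_div_iff₀ hq]; linarith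
    · field_simp
  have : Fact (1 ≤ p / ENNReal.ofReal q) := ⟨hpq.one_le⟩
  have hg : MemLp (fun x ↦ ‖v x‖ ^ (q + 1)) 1 μ := by
    simpa [p, ENNReal.toReal_ofReal (by linarith : 0 ≤ q + 1)] using hv.norm_rpow hp₀ hp
  have hgc := tendsto_eLpNorm_comp_sub ENNReal.one_ne_top hc hcμ hc₀ hg
  have hwc := tendsto_eLpNorm_comp_sub (ENNReal.div_ne_top hp (by simpa using hq)) hc hcμ hc₀
    (hv.vpow hq)
  refine tendsto_of_tendsto_of_tendsto_of_le_of_le tendsto_const_nhds ?_ (fun _ ↦ zero_le)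
    fun y ↦ lintegral_enorm_bterm_le (p := p) (p' := p / ENNReal.ofReal q) (by linarith)
      (hv.1.comp_measurePreserving (hcμ y)) hv.1
  simpa using (ENNReal.Tendsto.const_mul hgc (.inr enorm_ne_top)).add
    (ENNReal.Tendsto.mul_const hwc (.inr hv.eLpNorm_ne_top))

end Translation

theorem enorm_integral_integral_le {α β E : Type*} [MeasurableSpace α] [MeasurableSpace β]
    [NormedAddCommGroup E] [NormedSpace ℝ E] {μ : Measure α} {ν : Measure β} [SFinite μ]
    [SFinite ν] {F : α → β → E} (hF : AEStronglyMeasurable (Function.uncurry F) (μ.prod ν)) :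
    ‖∫ x, ∫ y, F x y ∂ν ∂μ‖ₑ ≤ ∫⁻ y, ∫⁻ x, ‖F x y‖ₑ ∂μ ∂ν :=
  calc ‖∫ x, ∫ y, F x y ∂ν ∂μ‖ₑ ≤ ∫⁻ x, ‖∫ y, F x y ∂ν‖ₑ ∂μ := enorm_integral_le_lintegral_enorm _
    _ ≤ ∫⁻ x, ∫⁻ y, ‖F x y‖ₑ ∂ν ∂μ := lintegral_mono fun _ ↦ enorm_integral_le_lintegral_enorm _
    _ = _ := lintegral_lintegral_swap hF.enorm

theorem enorm_setIntegral_intervalAverage_le {Z : Type*} [MeasurableSpace Z] {μ : Measure Z}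
    [SFinite μ] (S : Set Z) (t : Z → ℝ) {F : Z → ℝ → ℝ}
    (hF : AEStronglyMeasurable (fun zr : Z × ℝ ↦ F zr.1 (t zr.1 + zr.2)) (μ.prod volume))
    {h : ℝ} (hh : 0 < h) :
    ‖∫ z in S, (1 / h) * (∫ s in t z..t z + h, F z s) ∂μ‖ₑ ≤
      (ENNReal.ofReal h)⁻¹ * ∫⁻ r in Ioc 0 h, ∫⁻ z, ‖F z (t z + r)‖ₑ ∂μ := by
  have hshift (z : Z) : ∫ s in t z..t z + h, F z s = ∫ r in Ioc 0 h, F z (t z + r) := by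
    rw [← integral_of_le hh.le, intervalIntegral.integral_comp_add_left, add_zero]
  simp_rw [hshift, MeasureTheory.integral_const_mul, enorm_mul, one_div,
    Real.enorm_eq_ofReal (inv_nonneg.2 hh.le), ENNReal.ofReal_inv_of_pos hh]
  gcongr
  calc _ ≤ ∫⁻ r in Ioc 0 h, ∫⁻ z in S, ‖F z (t z + r)‖ₑ ∂μ := by
        refine enorm_integral_integral_le (F := fun z r ↦ F z (t z + r)) ?_
        rw [Measure.prod_restrict]
        exact hF.restrict
    _ ≤ _ := lintegral_mono fun r ↦ setLIntegral_le_lintegral S _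

theorem tendsto_inv_mul_setLIntegral_Ioc_zero {Φ : ℝ → ℝ≥0∞} (hΦ : Tendsto Φ (𝓝[>] 0) (𝓝 0)) :
    Tendsto (fun h ↦ (ENNReal.ofReal h)⁻¹ * ∫⁻ r in Ioc 0 h, Φ r) (𝓝[>] 0) (𝓝 0) := by
  rw [ENNReal.tendsto_nhds_zero] at hΦ ⊢
  intro ε hε
  obtain ⟨δ, hδ, hΦδ⟩ := mem_nhdsGT_iff_exists_Ioo_subset.1 (hΦ ε hε)
  filter_upwards [Ioo_mem_nhdsGT hδ] with h hh
  calc (ENNReal.ofReal h)⁻¹ * ∫⁻ r in Ioc 0 h, Φ r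
      ≤ (ENNReal.ofReal h)⁻¹ * ∫⁻ _ in Ioc 0 h, ε := by
        refine mul_le_mul_of_nonneg_left ?_ zero_le
        exact setLIntegral_mono' measurableSet_Ioc fun r hr ↦ hΦδ ⟨hr.1, hr.2.trans_lt hh.2⟩
    _ = ε := by
        rw [setLIntegral_const, Real.volume_Ioc, sub_zero, mul_comm ε, ← mul_assoc,
          ENNReal.inv_mul_cancel (by simpa using hh.1) ENNReal.ofReal_ne_top, one_mul]

section ShiftSnd

variable (X : Type*) [TopologicalSpace X]

def shiftSnd (r : ℝ) : C(X × ℝ, X × ℝ) :=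
  ⟨fun z ↦ (z.1, z.2 + r), by fun_prop⟩

theorem continuous_shiftSnd : Continuous (shiftSnd X) :=
  ContinuousMap.continuous_of_continuous_uncurry _
    (show Continuous fun p : ℝ × (X × ℝ) ↦ (p.2.1, p.2.2 + p.1) by fun_prop)

theorem shiftSnd_zero : shiftSnd X 0 = ContinuousMap.id _ := by
  ext z <;> simp [shiftSnd]

theorem measurePreserving_shiftSnd [MeasurableSpace X] (μ : Measure X) [SFinite μ] (r : ℝ) :
    MeasurePreserving (shiftSnd X r) (μ.prod volume) (μ.prod volume) :=
  (MeasurePreserving.id μ).prod (measurePreserving_add_right volume r)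

end ShiftSnd

theorem stmt17_general (n N : ℕ) (q T : ℝ) (hq : 0 < q)
    (Ω : Set (EuclideanSpace ℝ (Fin n))) (hΩ : MeasurableSet Ω)
    (u : EuclideanSpace ℝ (Fin n) × ℝ → EuclideanSpace ℝ (Fin N))
    (humeas : Measurable u)
    (hext : ∀ (x : EuclideanSpace ℝ (Fin n)) (t : ℝ), T < t → u (x, t) = 0)
    (hLp : MemLp u (ENNReal.ofReal (q + 1)) (volume.restrict (Ω ×ˢ Set.Ioo 0 T))) :
    Filter.Tendsto
      (fun h : ℝ => ∫ z in Ω ×ˢ Set.Ioo (0:ℝ) T,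
        (1 / h) * ∫ s in z.2..(z.2 + h), bterm q (u (z.1, s)) (u (z.1, z.2)))
      (nhdsWithin 0 (Set.Ioi 0)) (nhds 0) := by
  -- `Ioc` rather than `Ioo`, so that `v = u` on all of `Ω × (0, ∞)`.
  have hS : MeasurableSet (Ω ×ˢ Ioc 0 T) := hΩ.prod measurableSet_Ioc
  set v := (Ω ×ˢ Ioc 0 T).indicator u
  have hv : MemLp v (ENNReal.ofReal (q + 1)) volume := by
    have hIoc : Ω ×ˢ Ioo 0 T =ᵐ[volume] Ω ×ˢ Ioc 0 T :=
      Measure.set_prod_ae_eq (ae_eq_refl Ω) Ioo_ae_eq_Ioc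
    rwa [memLp_indicator_iff_restrict hS, ← Measure.restrict_congr_set hIoc]
  have huv (x) (hx : x ∈ Ω) (s : ℝ) (hs : 0 < s) : u (x, s) = v (x, s) := by
    by_cases hsT : s ≤ T
    · simp [v, hx, hs, hsT]
    · simp [v, hext x s (not_le.1 hsT), hsT]
  have hΦ := tendsto_lintegral_enorm_bterm_comp (continuous_shiftSnd _)
    (measurePreserving_shiftSnd _ volume) (shiftSnd_zero _) hq hv
  refine tendsto_zero_iff_enorm_tendsto_zero.2 <| tendsto_of_tendsto_of_tendsto_of_le_of_le'
    tendsto_const_nhds (tendsto_inv_mul_setLIntegral_Ioc_zero (hΦ.mono_left nhdsWithin_le_nhds))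
    (.of_forall fun _ ↦ zero_le) ?_
  filter_upwards [self_mem_nhdsWithin] with h (hh : 0 < h)
  have huv_int : ∀ z ∈ Ω ×ˢ Ioo 0 T,
      (1 / h) * ∫ s in z.2..z.2 + h, bterm q (u (z.1, s)) (u (z.1, z.2)) =
        (1 / h) * ∫ s in z.2..z.2 + h, bterm q (v (z.1, s)) (v z) := by
    rintro ⟨x, t⟩ ⟨hx, ht, -⟩
    congr 1
    refine intervalIntegral.integral_congr fun s hs ↦ ?_
    rw [uIcc_of_le (by linarith)] at hs
    simp only [huv x hx s (ht.trans_le hs.1), huv x hx t ht]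
  rw [setIntegral_congr_fun (hΩ.prod measurableSet_Ioo) huv_int]
  exact enorm_setIntegral_intervalAverage_le (F := fun z s ↦ bterm q (v (z.1, s)) (v z)) _
    Prod.snd (by unfold bterm vpow; fun_prop) hh

/-- For `u ∈ L^{q+1}(Ω × (0,T), ℝ^N)`, extended by zero for `t > T` and with `Ω` of finite
measure, the Steklov averages `(x,t) ↦ ⨍_t^{t+h} 𝔟[u(x,s), u(x,t)] ds` converge to
`𝔟[u(x,t),u(x,t)] = 0` in `L^1(Ω × (0,T))` as `h ↓ 0`:
`lim_{h ↓ 0} ∫_0^T ∫_Ω (1/h) ∫_t^{t+h} 𝔟[u(x,s), u(x,t)] ds dx dt = 0`. -/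
theorem stmt17 (n N : ℕ) (hn : 1 ≤ n) (hN : 1 ≤ N) (q T : ℝ) (hq : 0 < q) (hT : 0 < T)
    (Ω : Set (EuclideanSpace ℝ (Fin n))) (hΩ : MeasurableSet Ω) (hΩfin : volume Ω < ⊤)
    (u : EuclideanSpace ℝ (Fin n) × ℝ → EuclideanSpace ℝ (Fin N))
    (humeas : Measurable u)
    (hext : ∀ (x : EuclideanSpace ℝ (Fin n)) (t : ℝ), T < t → u (x, t) = 0)
    (hLp : MemLp u (ENNReal.ofReal (q + 1)) (volume.restrict (Ω ×ˢ Set.Ioo 0 T))) :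
    Filter.Tendsto
      (fun h : ℝ => ∫ z in Ω ×ˢ Set.Ioo (0:ℝ) T,
        (1 / h) * ∫ s in z.2..(z.2 + h), bterm q (u (z.1, s)) (u (z.1, z.2)))
      (nhdsWithin 0 (Set.Ioi 0)) (nhds 0) :=
  stmt17_general n N q T hq Ω hΩ u humeas hext hLp
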